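/- For z > 0, ε > 0, and exponents satisfying 0 < n < s and 0 < α < s - n, the quantity ε·z^(α+s-n)/(z^(s-n)+ε)² is bounded above by C(α,s,n)·ε^(α/(s-n)), where C(α,s,n) = (α/(s-n))·((s-n-α)/α)^((s-n-α)/(s-n)). -/

import Mathlib

/-!
Put `β = α / (s - n) ∈ (0, 1)` and `w = z ^ (s - n)`, so that the left-hand side is
`ε * w ^ (β + 1) / (w + ε) ^ 2`. Weighted AM–GM with weights `β, 1 - β` applied to `w / β` and
`ε / (1 - β)` gives `w ^ β * ε ^ (1 - β) ≤ β ^ β * (1 - β) ^ (1 - β) * (w + ε)`; multiplying by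
`w ≤ w + ε` and by `ε ^ β` yields the bound, and `β ^ β * (1 - β) ^ (1 - β)` is the stated constant.
-/

open Real

namespace Real

theorem rpow_mul_rpow_one_sub_le {β a b : ℝ} (hβ₀ : 0 < β) (hβ₁ : β < 1) (ha : 0 ≤ a)
    (hb : 0 ≤ b) : a ^ β * b ^ (1 - β) ≤ β ^ β * (1 - β) ^ (1 - β) * (a + b) := by
  have h1β : 0 < 1 - β := sub_pos.mpr hβ₁
  have amgm : (a / β) ^ β * (b / (1 - β)) ^ (1 - β) ≤ a + b := by
    calc (a / β) ^ β * (b / (1 - β)) ^ (1 - β)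
        ≤ β * (a / β) + (1 - β) * (b / (1 - β)) :=
          geom_mean_le_arith_mean2_weighted hβ₀.le h1β.le (by positivity) (by positivity)
            (by ring)
      _ = a + b := by field_simp
  calc a ^ β * b ^ (1 - β)
      = β ^ β * (1 - β) ^ (1 - β) * ((a / β) ^ β * (b / (1 - β)) ^ (1 - β)) := by
        rw [div_rpow ha hβ₀.le, div_rpow hb h1β.le]
        have : 0 < β ^ β := rpow_pos_of_pos hβ₀ β
        have : 0 < (1 - β) ^ (1 - β) := rpow_pos_of_pos h1β (1 - β)
        field_simp
    _ ≤ β ^ β * (1 - β) ^ (1 - β) * (a + b) := by gcongr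

theorem mul_rpow_succ_div_add_sq_le {β w ε : ℝ} (hβ₀ : 0 < β) (hβ₁ : β < 1) (hw : 0 ≤ w)
    (hε : 0 < ε) : ε * w ^ (β + 1) / (w + ε) ^ 2 ≤ β ^ β * (1 - β) ^ (1 - β) * ε ^ β := by
  have hwε : 0 < w + ε := by linarith
  rw [div_le_iff₀ (by positivity)]
  calc ε * w ^ (β + 1)
      = ε ^ β * (w ^ β * ε ^ (1 - β)) * w := by
        have hsplit : ε = ε ^ β * ε ^ (1 - β) := by
          rw [← rpow_add hε, add_sub_cancel, rpow_one]
        rw [rpow_add' hw (by linarith), rpow_one]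
        conv_lhs => rw [hsplit]
        ring
    _ ≤ ε ^ β * (β ^ β * (1 - β) ^ (1 - β) * (w + ε)) * (w + ε) := by
        gcongr ε ^ β * ?_ * ?_
        · exact rpow_mul_rpow_one_sub_le hβ₀ hβ₁ hw hε.le
        · linarith
    _ = β ^ β * (1 - β) ^ (1 - β) * ε ^ β * (w + ε) ^ 2 := by ring

theorem mul_one_sub_div_rpow_one_sub {β : ℝ} (hβ₀ : 0 < β) (hβ₁ : β ≤ 1) :
    β * ((1 - β) / β) ^ (1 - β) = β ^ β * (1 - β) ^ (1 - β) := by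
  rw [div_rpow (sub_nonneg.mpr hβ₁) hβ₀.le, rpow_sub hβ₀, rpow_one]
  have : 0 < β ^ β := rpow_pos_of_pos hβ₀ β
  field_simp

end Real

theorem regularization_error_bound_general (n s α ε z : ℝ)
    (hα : 0 < α) (hαs : α < s - n) (hε : 0 < ε) (hz : 0 < z) :
    ε * z ^ (α + s - n) / (z ^ (s - n) + ε) ^ 2 ≤
      (α / (s - n)) * ((s - n - α) / α) ^ ((s - n - α) / (s - n)) * ε ^ (α / (s - n)) := by
  have hsn : 0 < s - n := hα.trans hαs
  set β := α / (s - n) with hβ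
  have hβ₀ : 0 < β := div_pos hα hsn
  have hβ₁ : β < 1 := (div_lt_one hsn).mpr hαs
  have hnum : z ^ (α + s - n) = (z ^ (s - n)) ^ (β + 1) := by
    rw [← rpow_mul hz.le]
    congr 1
    rw [hβ]
    field_simp
    ring
  have hconst : (α / (s - n)) * ((s - n - α) / α) ^ ((s - n - α) / (s - n))
      = β * ((1 - β) / β) ^ (1 - β) := by
    have h₁ : (s - n - α) / α = (1 - β) / β := by rw [hβ]; field_simp
    have h₂ : (s - n - α) / (s - n) = 1 - β := by rw [hβ]; field_simp
    rw [h₁, h₂]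
  rw [hnum, hconst, mul_one_sub_div_rpow_one_sub hβ₀ hβ₁.le]
  exact mul_rpow_succ_div_add_sq_le hβ₀ hβ₁ (rpow_nonneg hz.le _) hε

/-- For `z > 0`, `ε > 0`, `0 < n < s`, `0 < α < s - n`:
`ε·z^(α+s-n)/(z^(s-n)+ε)² ≤ (α/(s-n))·((s-n-α)/α)^((s-n-α)/(s-n))·ε^(α/(s-n))`. -/
theorem regularization_error_bound (n s α ε z : ℝ) (hn : 0 < n) (hns : n < s)
    (hα : 0 < α) (hαs : α < s - n) (hε : 0 < ε) (hz : 0 < z) :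
    ε * z ^ (α + s - n) / (z ^ (s - n) + ε) ^ 2 ≤
      (α / (s - n)) * ((s - n - α) / α) ^ ((s - n - α) / (s - n)) * ε ^ (α / (s - n)) :=
  regularization_error_bound_general n s α ε z hα hαs hε hz
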